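/- arXiv:math/9201280 — 2 statements merged into one kernel-verified Lean document; each statement's English description precedes it below -/
import Mathlib

section
/- Let f be a complex polynomial of degree d whose roots all lie in the open disk of radius R centered at 0, and let ω_m = 2R·e^{2πim/(nd)} for integers m and a positive integer n. Then |arg(f(ω_{m+1})/f(ω_m))| ≤ 4π/n. -/
open Polynomial

private lemma multiset_im_sum (s : Multiset ℂ) : s.sum.im = (s.map Complex.im).sum := by
  induction s using Multiset.induction with
  | empty => simp
  | cons a s ih => simp [ih]

private lemma multiset_abs_sum_le (s : Multiset ℝ) : |s.sum| ≤ (s.map abs).sum := by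
  induction s using Multiset.induction with
  | empty => simp
  | cons a s ih =>
    simp only [Multiset.sum_cons, Multiset.map_cons]
    exact (abs_add_le _ _).trans (by gcongr)

private lemma im_log_diff_bound (c : ℂ) (hc : ‖c‖ ≤ 1/2) (a b : ℝ) (hab : a ≤ b) :
    |(Complex.log (1 - c * Complex.exp (-(b:ℂ) * Complex.I))).im
      - (Complex.log (1 - c * Complex.exp (-(a:ℂ) * Complex.I))).im| ≤ b - a := by
  set g : ℝ → ℝ := fun t => (Complex.log (1 - c * Complex.exp (-(t:ℂ) * Complex.I))).im with hg
  have key : ∀ t : ℝ, (1:ℝ)/2 ≤ (1 - c * Complex.exp (-(t:ℂ) * Complex.I)).re ∧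
      ‖c * Complex.exp (-(t:ℂ) * Complex.I)‖ ≤ 1/2 := by
    intro t
    have h1 : ‖Complex.exp (-(t:ℂ) * Complex.I)‖ = 1 := by
      rw [Complex.norm_exp]
      simp
    have h2 : ‖c * Complex.exp (-(t:ℂ) * Complex.I)‖ ≤ 1/2 := by
      rw [norm_mul, h1, mul_one]; exact hc
    refine ⟨?_, h2⟩
    have h3 : |(c * Complex.exp (-(t:ℂ) * Complex.I)).re| ≤ 1/2 :=
      (Complex.abs_re_le_norm _).trans h2
    have h4 : (1 - c * Complex.exp (-(t:ℂ) * Complex.I)).re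
        = 1 - (c * Complex.exp (-(t:ℂ) * Complex.I)).re := by simp
    rw [h4]
    have := (abs_le.mp h3).2
    linarith
  have hderiv : ∀ t : ℝ, HasDerivAt g
      (((c * Complex.I * Complex.exp (-(t:ℂ) * Complex.I)) /
        (1 - c * Complex.exp (-(t:ℂ) * Complex.I))).im) t := by
    intro t
    have h1 : HasDerivAt (fun w : ℂ => -w * Complex.I) (-Complex.I) (t : ℂ) := by
      simpa using ((hasDerivAt_id (t:ℂ)).neg.mul_const Complex.I)
    have h4 : HasDerivAt (fun w : ℂ => 1 - c * Complex.exp (-w * Complex.I))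
        (c * Complex.I * Complex.exp (-(t:ℂ) * Complex.I)) (t : ℂ) := by
      have := (h1.cexp.const_mul c).const_sub 1
      exact this.congr_deriv (by ring)
    have hslit : (1 - c * Complex.exp (-(t:ℂ) * Complex.I)) ∈ Complex.slitPlane :=
      Complex.mem_slitPlane_iff.mpr (Or.inl (lt_of_lt_of_le (by norm_num) (key t).1))
    have h5 := (h4.clog hslit).comp_ofReal
    have h6 := Complex.imCLM.hasFDerivAt.comp_hasDerivAt t h5
    simpa [Function.comp_def, g] using h6
  have hbound : ∀ t : ℝ,
      ‖((c * Complex.I * Complex.exp (-(t:ℂ) * Complex.I)) /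
        (1 - c * Complex.exp (-(t:ℂ) * Complex.I))).im‖ ≤ 1 := by
    intro t
    obtain ⟨hre, hn⟩ := key t
    have hznorm : (1:ℝ)/2 ≤ ‖1 - c * Complex.exp (-(t:ℂ) * Complex.I)‖ :=
      hre.trans ((le_abs_self _).trans (Complex.abs_re_le_norm _))
    have hnum : ‖c * Complex.I * Complex.exp (-(t:ℂ) * Complex.I)‖ ≤ 1/2 := by
      have h1 : ‖Complex.exp (-(t:ℂ) * Complex.I)‖ = 1 := by
        rw [Complex.norm_exp]; simp
      rw [norm_mul, norm_mul, h1, Complex.norm_I, mul_one, mul_one]; exact hc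
    have : ‖((c * Complex.I * Complex.exp (-(t:ℂ) * Complex.I)) /
        (1 - c * Complex.exp (-(t:ℂ) * Complex.I)))‖ ≤ 1 := by
      rw [norm_div]
      rw [div_le_one (by linarith)]
      linarith
    calc ‖((c * Complex.I * Complex.exp (-(t:ℂ) * Complex.I)) /
        (1 - c * Complex.exp (-(t:ℂ) * Complex.I))).im‖
        ≤ ‖((c * Complex.I * Complex.exp (-(t:ℂ) * Complex.I)) /
        (1 - c * Complex.exp (-(t:ℂ) * Complex.I)))‖ := Complex.abs_im_le_norm _
      _ ≤ 1 := this
  have := Convex.norm_image_sub_le_of_norm_hasDerivWithin_le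
      (f := g) (C := 1) (s := Set.univ)
      (fun x _ => (hderiv x).hasDerivWithinAt) (fun x _ => hbound x)
      convex_univ (Set.mem_univ a) (Set.mem_univ b)
  rw [one_mul] at this
  calc |g b - g a| ≤ ‖b - a‖ := this
    _ = b - a := by rw [Real.norm_eq_abs, abs_of_nonneg (by linarith)]


/-- If all roots of a degree-`d` polynomial `f` lie in the open disk of radius
`R` about `0`, and `ω_m = 2R e^{2πim/(nd)}`, then
`|arg(f(ω_{m+1})/f(ω_m))| ≤ 4π/n`. -/
theorem arg_variation_bound (f : Polynomial ℂ) (d n : ℕ)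
    (hd : f.natDegree = d) (hd1 : 1 ≤ d) (hn : 1 ≤ n)
    (R : ℝ) (hR : 0 < R)
    (hroots : ∀ z : ℂ, f.IsRoot z → ‖z‖ < R)
    (ω : ℤ → ℂ)
    (hω : ∀ m : ℤ, ω m = 2 * R * Complex.exp (2 * Real.pi * Complex.I * m / (n * d)))
    (m : ℤ) :
    |Complex.arg (f.eval (ω (m + 1)) / f.eval (ω m))| ≤ 4 * Real.pi / n := by
  have hd0 : (0:ℝ) < d := by exact_mod_cast hd1
  have hn0 : (0:ℝ) < n := by exact_mod_cast hn
  set M : ℝ := (n:ℝ) * d with hM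
  have hM0 : 0 < M := by positivity
  set θ : ℝ := 2 * Real.pi / M with hθdef
  have hθ0 : 0 < θ := by positivity
  set α : ℝ := 2 * Real.pi * m / M with hαdef
  clear_value M θ α
  -- rewrite ω
  have hωeq : ∀ k : ℤ, ω k = 2 * R * Complex.exp (Complex.I * ((2 * Real.pi * k / M : ℝ) : ℂ)) := by
    intro k
    rw [hω k]
    congr 1
    rw [show ((2 * Real.pi * k / M : ℝ) : ℂ) = 2 * Real.pi * (k:ℂ) / ((n:ℂ)*(d:ℂ)) from by
      rw [hM]; push_cast; ring]
    ring
  -- factorization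
  have hf0 : f ≠ 0 := fun h => by simp [h] at hd; omega
  have hL : f.leadingCoeff ≠ 0 := leadingCoeff_ne_zero.mpr hf0
  have hsplits := IsAlgClosed.splits f
  have hcard : f.roots.card = d := by
    rw [Polynomial.splits_iff_card_roots.mp hsplits, hd]
  have hfactor := hsplits.eq_prod_roots
  set W : ℂ → ℝ → ℂ := fun ζ t => 1 - ζ/(2*R) * Complex.exp (-(t:ℂ) * Complex.I) with hW
  have hRC : (2*(R:ℂ)) ≠ 0 := by
    simp only [ne_eq, mul_eq_zero]
    push_neg
    exact ⟨two_ne_zero, Complex.ofReal_ne_zero.mpr hR.ne'⟩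
  have hcnorm : ∀ ζ ∈ f.roots, ‖ζ/(2*(R:ℂ))‖ ≤ 1/2 := by
    intro ζ hζ
    have hroot : f.IsRoot ζ := (Polynomial.mem_roots hf0).mp hζ
    have := hroots ζ hroot
    rw [norm_div]
    have h2R : ‖(2*(R:ℂ))‖ = 2*R := by
      rw [norm_mul]
      simp [Complex.norm_real, abs_of_pos hR]
    rw [h2R, div_le_div_iff₀ (by positivity) (by norm_num)]
    linarith
  have hWnorm : ∀ ζ ∈ f.roots, ∀ t : ℝ, W ζ t ≠ 0 := by
    intro ζ hζ t
    have h1 : ‖ζ/(2*(R:ℂ)) * Complex.exp (-(t:ℂ) * Complex.I)‖ ≤ 1/2 := by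
      rw [norm_mul]
      have : ‖Complex.exp (-(t:ℂ) * Complex.I)‖ = 1 := by
        rw [Complex.norm_exp]; simp
      rw [this, mul_one]
      exact hcnorm ζ hζ
    intro h
    rw [hW] at h
    simp only [sub_eq_zero] at h
    rw [← h] at h1
    norm_num at h1
  -- evaluation formula
  have hexp1 : ∀ t : ℝ, Complex.exp (Complex.I * t) * Complex.exp (-(t:ℂ) * Complex.I) = 1 := by
    intro t
    rw [← Complex.exp_add]
    have : Complex.I * t + -(t:ℂ) * Complex.I = 0 := by ring
    rw [this, Complex.exp_zero]
  have heval : ∀ t : ℝ, f.eval (2*R*Complex.exp (Complex.I * t)) =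
      f.leadingCoeff * (2*R*Complex.exp (Complex.I * (t:ℂ)))^d
        * (f.roots.map (fun ζ => W ζ t)).prod := by
    intro t
    conv_lhs => rw [hfactor]
    rw [eval_mul, eval_C, eval_multiset_prod, Multiset.map_map]
    have hpt : ∀ ζ ∈ f.roots, eval (2*R*Complex.exp (Complex.I * t)) (X - C ζ)
        = (2*R*Complex.exp (Complex.I * (t:ℂ))) * W ζ t := by
      intro ζ hζ
      rw [eval_sub, eval_X, eval_C, hW]
      beta_reduce
      have h := hexp1 t
      generalize Complex.exp (-(t:ℂ) * Complex.I) = u at h ⊢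
      generalize Complex.exp (Complex.I * (t:ℂ)) = e at h ⊢
      have key : (2*(R:ℂ)*e) * (1 - ζ/(2*R)*u) = 2*R*e - ζ*(e*u) := by
        field_simp [Complex.ofReal_ne_zero.mpr hR.ne']
      rw [key, h, mul_one]
    rw [Multiset.map_congr rfl fun ζ hζ => by simpa using hpt ζ hζ]
    have : (f.roots.map fun ζ => (2*R*Complex.exp (Complex.I * (t:ℂ))) * W ζ t).prod
        = (2*R*Complex.exp (Complex.I * (t:ℂ)))^d * (f.roots.map fun ζ => W ζ t).prod := by
      rw [Multiset.prod_map_mul]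
      congr 1
      rw [Multiset.map_const', Multiset.prod_replicate, hcard]
    rw [this]
    ring
  -- the two points
  have hω0 : ω m = 2*R*Complex.exp (Complex.I * ((α : ℝ) : ℂ)) := by
    rw [hωeq m, hαdef]
  have hω1 : ω (m+1) = 2*R*Complex.exp (Complex.I * ((α + θ : ℝ) : ℂ)) := by
    rw [hωeq (m+1), show (2 * Real.pi * ((m+1 : ℤ) : ℝ) / M) = α + θ from by
      rw [hαdef, hθdef]; push_cast; ring]
  -- the exponent
  obtain ⟨E, hE⟩ : ∃ E : ℂ, E = ((θ * d : ℝ) : ℂ) * Complex.I +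
      (f.roots.map (fun ζ => Complex.log (W ζ (α+θ)) - Complex.log (W ζ α))).sum := ⟨_, rfl⟩
  have hPne : ∀ t : ℝ, (f.roots.map (fun ζ => W ζ t)).prod ≠ 0 := by
    intro t
    refine Multiset.prod_ne_zero ?_
    intro hmem
    obtain ⟨ζ, hζ, hz⟩ := Multiset.mem_map.mp hmem
    exact hWnorm ζ hζ t hz
  have hexpE : Complex.exp E = f.eval (ω (m+1)) / f.eval (ω m) := by
    rw [hω0, hω1, heval, heval]
    have hEexp : Complex.exp E = Complex.exp (((θ*d:ℝ):ℂ)*Complex.I) *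
        (f.roots.map (fun ζ => W ζ (α+θ) / W ζ α)).prod := by
      rw [hE, Complex.exp_add, Complex.exp_multiset_sum, Multiset.map_map]
      congr 1
      refine congr_arg Multiset.prod (Multiset.map_congr rfl ?_)
      intro ζ hζ
      simp only [Function.comp]
      rw [Complex.exp_sub, Complex.exp_log (hWnorm ζ hζ _), Complex.exp_log (hWnorm ζ hζ _)]
    rw [hEexp, Multiset.prod_map_div]
    have hApow : (2*(R:ℂ)*Complex.exp (Complex.I * ((α+θ:ℝ):ℂ)))^d
        = (2*(R:ℂ)*Complex.exp (Complex.I * ((α:ℝ):ℂ)))^d * Complex.exp (((θ*d:ℝ):ℂ)*Complex.I) := by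
      have he2 : Complex.exp (Complex.I * ((α+θ:ℝ):ℂ)) ^ d
          = Complex.exp (Complex.I * ((α:ℝ):ℂ)) ^ d * Complex.exp (((θ*d:ℝ):ℂ)*Complex.I) := by
        rw [← Complex.exp_nat_mul, ← Complex.exp_nat_mul, ← Complex.exp_add]
        congr 1
        push_cast
        ring
      rw [mul_pow, mul_pow, he2]
      ring
    rw [hApow]
    have hA : (2*(R:ℂ)*Complex.exp (Complex.I * ((α:ℝ):ℂ)))^d ≠ 0 :=
      pow_ne_zero _ (mul_ne_zero hRC (Complex.exp_ne_zero _))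
    field_simp [hL, hA, hPne α]
  -- bound on the imaginary part
  have hEim : |E.im| ≤ 4 * Real.pi / n := by
    obtain ⟨S, hS⟩ : ∃ S : ℝ,
        S = ((f.roots.map (fun ζ => Complex.log (W ζ (α+θ)) - Complex.log (W ζ α))).sum).im :=
      ⟨_, rfl⟩
    have h1 : E.im = θ*(d:ℝ) + S := by
      rw [hE, Complex.add_im, ← hS]
      simp
    have h2 : |S| ≤ (d:ℝ) * θ := by
      rw [hS, multiset_im_sum, Multiset.map_map]
      refine (multiset_abs_sum_le _).trans ?_
      rw [Multiset.map_map]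
      have hle : ∀ x ∈ f.roots.map
          (abs ∘ (Complex.im ∘ fun ζ => Complex.log (W ζ (α+θ)) - Complex.log (W ζ α))), x ≤ θ := by
        intro x hx
        obtain ⟨ζ, hζ, hz⟩ := Multiset.mem_map.mp hx
        have hb := im_log_diff_bound (ζ/(2*R)) (hcnorm ζ hζ) α (α+θ) (by linarith)
        have hsub : α + θ - α = θ := by ring
        rw [hsub] at hb
        rw [← hz]
        simp only [Function.comp, Complex.sub_im, hW]
        exact hb
      have := Multiset.sum_le_card_nsmul _ _ hle
      rwa [Multiset.card_map, hcard, nsmul_eq_mul] at this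
    have h3 : 2 * θ * d = 4 * Real.pi / n := by
      rw [hθdef, hM]
      field_simp
      ring
    calc |E.im| = |θ*(d:ℝ) + S| := by rw [h1]
      _ ≤ |θ*(d:ℝ)| + |S| := abs_add_le _ _
      _ = θ*(d:ℝ) + |S| := by rw [abs_of_nonneg (by positivity)]
      _ ≤ θ*(d:ℝ) + (d:ℝ)*θ := by linarith
      _ = 2 * θ * d := by ring
      _ = 4 * Real.pi / n := h3
  -- conclude
  by_cases hcase : |E.im| < Real.pi
  · obtain ⟨hc1, hc2⟩ := abs_lt.mp hcase
    have hlog : Complex.log (Complex.exp E) = E := Complex.log_exp hc1 hc2.le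
    have harg : Complex.arg (Complex.exp E) = E.im := by
      rw [← Complex.log_im (Complex.exp E), hlog]
    rw [← hexpE, harg]
    exact hEim
  · push_neg at hcase
    exact (Complex.abs_arg_le_pi _).trans (hcase.trans hEim)
end

section
/- Let P(z) = ∏_{k=1}^n (z − ξ_k) and p(z) = ∏_{k=1}^n (z − v_k) be monic polynomials of degree n with |ξ_k| < 3/4 and |ξ_k − v_k| < δ ≤ 1/(8n²). Then the coefficients of P − p satisfy ‖P − p‖ < 8nδ(7/4)^n, where ‖·‖ is the maximum absolute value of the coefficients. -/
open Polynomial Finset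

/-- Coefficient bound for a monic product of linear factors with roots of norm ≤ r. -/
lemma coeff_prod_linear_le (r : ℝ) (hr : 0 ≤ r) :
    ∀ (L : List ℂ), (∀ a ∈ L, ‖a‖ ≤ r) →
    ∀ i, ‖((L.map fun a => X - C a).prod).coeff i‖ ≤ (1 + r) ^ L.length := by
  intro L
  induction L with
  | nil =>
    intro _ i
    simp only [List.map_nil, List.prod_nil, List.length_nil, pow_zero]
    rcases i with _ | i <;> simp [Polynomial.coeff_one]
  | cons a t ih =>
    intro hmem i
    have ha : ‖a‖ ≤ r := hmem a List.mem_cons_self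
    have ht : ∀ b ∈ t, ‖b‖ ≤ r := fun b hb => hmem b (List.mem_cons_of_mem a hb)
    set Q := (t.map fun a => X - C a).prod with hQ
    have hprod : ((a :: t).map fun a => X - C a).prod = (X - C a) * Q := by
      simp [hQ]
    rw [hprod]
    have hpos : (0:ℝ) ≤ (1 + r) ^ t.length := by positivity
    have hXQ : ‖(X * Q).coeff i‖ ≤ (1 + r) ^ t.length := by
      rcases i with _ | j
      · simp only [Polynomial.mul_coeff_zero, Polynomial.coeff_X_zero, zero_mul, norm_zero]
        exact hpos
      · rw [Polynomial.coeff_X_mul]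
        exact ih ht j
    have hexp : ((X - C a) * Q).coeff i = (X * Q).coeff i - a * Q.coeff i := by
      rw [sub_mul]
      simp [Polynomial.coeff_sub, Polynomial.coeff_C_mul]
    rw [hexp, List.length_cons, pow_succ]
    have h2 : ‖a * Q.coeff i‖ ≤ r * (1 + r) ^ t.length := by
      rw [norm_mul]
      exact mul_le_mul ha (ih ht i) (norm_nonneg _) hr
    have h3 := norm_sub_le ((X * Q).coeff i) (a * Q.coeff i)
    nlinarith

lemma coeff_prod_sub_prod_le (r : ℝ) (hr : 0 ≤ r) :
    ∀ (L : List (ℂ × ℂ)), (∀ pq : ℂ × ℂ, pq ∈ L → ‖pq.1‖ ≤ r ∧ ‖pq.2‖ ≤ r) →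
    ∀ i, ‖(((L.map fun pq : ℂ × ℂ => X - C pq.1).prod)
          - ((L.map fun pq : ℂ × ℂ => X - C pq.2).prod)).coeff i‖
      ≤ (L.map fun pq : ℂ × ℂ => ‖pq.1 - pq.2‖).sum * (1 + r) ^ L.length := by
  intro L
  induction L with
  | nil => intro _ i; simp
  | cons q t ih =>
    intro hmem i
    obtain ⟨ha, hb⟩ := hmem q List.mem_cons_self
    have htm : ∀ p : ℂ × ℂ, p ∈ t → ‖p.1‖ ≤ r ∧ ‖p.2‖ ≤ r :=
      fun p hp => hmem p (List.mem_cons_of_mem q hp)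
    set A := (t.map fun pq : ℂ × ℂ => X - C pq.1).prod with hA
    set B := (t.map fun pq : ℂ × ℂ => X - C pq.2).prod with hB
    set S := (t.map fun pq : ℂ × ℂ => ‖pq.1 - pq.2‖).sum with hS
    have hSnn : 0 ≤ S := by
      rw [hS]
      apply List.sum_nonneg
      intro x hx
      simp only [List.mem_map] at hx
      obtain ⟨p, _, rfl⟩ := hx
      exact norm_nonneg _
    have hpow : (0:ℝ) ≤ (1 + r) ^ t.length := by positivity
    have hdiff : ((q :: t).map fun pq : ℂ × ℂ => X - C pq.1).prod
        - ((q :: t).map fun pq : ℂ × ℂ => X - C pq.2).prod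
        = (X - C q.1) * (A - B) + (C q.2 - C q.1) * B := by
      simp only [List.map_cons, List.prod_cons, ← hA, ← hB]
      ring
    rw [hdiff]
    have hAB : ∀ j, ‖(A - B).coeff j‖ ≤ S * (1 + r) ^ t.length := ih htm
    have hXAB : ‖(X * (A - B)).coeff i‖ ≤ S * (1 + r) ^ t.length := by
      rcases i with _ | j
      · simp only [Polynomial.mul_coeff_zero, Polynomial.coeff_X_zero, zero_mul, norm_zero]
        positivity
      · rw [Polynomial.coeff_X_mul]; exact hAB j
    have hBc : ‖B.coeff i‖ ≤ (1 + r) ^ t.length := by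
      have : B = ((t.map Prod.snd).map fun a => X - C a).prod := by
        rw [hB, List.map_map]; rfl
      rw [this]
      have := coeff_prod_linear_le r hr (t.map Prod.snd) (by
        intro b hbm
        simp only [List.mem_map] at hbm
        obtain ⟨p, hp, rfl⟩ := hbm
        exact (htm p hp).2) i
      simpa using this
    have hexp : ((X - C q.1) * (A - B) + (C q.2 - C q.1) * B).coeff i
        = ((X * (A - B)).coeff i - q.1 * (A - B).coeff i) + (q.2 - q.1) * B.coeff i := by
      rw [Polynomial.coeff_add, sub_mul, sub_mul]
      simp only [Polynomial.coeff_sub, Polynomial.coeff_C_mul]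
      ring
    rw [hexp]
    have h1 : ‖q.1 * (A - B).coeff i‖ ≤ r * (S * (1 + r) ^ t.length) := by
      rw [norm_mul]
      exact mul_le_mul ha (hAB i) (norm_nonneg _) hr
    have h2 : ‖(q.2 - q.1) * B.coeff i‖ ≤ ‖q.1 - q.2‖ * (1 + r) ^ t.length := by
      rw [norm_mul, norm_sub_rev]
      exact mul_le_mul_of_nonneg_left hBc (norm_nonneg _)
    have h3 := norm_add_le ((X * (A - B)).coeff i - q.1 * (A - B).coeff i)
      ((q.2 - q.1) * B.coeff i)
    have h4 := norm_sub_le ((X * (A - B)).coeff i) (q.1 * (A - B).coeff i)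
    have hsum : ((q :: t).map fun pq : ℂ × ℂ => ‖pq.1 - pq.2‖).sum = ‖q.1 - q.2‖ + S := by
      simp [hS]
    rw [hsum, List.length_cons, pow_succ]
    have hd : 0 ≤ ‖q.1 - q.2‖ := norm_nonneg _
    nlinarith [mul_nonneg (mul_nonneg hd hpow) hr]

/-- For monic `P(z) = ∏(z − ξ_k)` and `p(z) = ∏(z − v_k)` with `|ξ_k| < 3/4`
and `|ξ_k − v_k| < δ ≤ 1/(8n²)`, every coefficient of `P − p` has modulus
less than `8nδ(7/4)^n`. -/
theorem coeff_perturbation_bound (n : ℕ) (hn : 1 ≤ n) (ξ v : Fin n → ℂ)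
    (δ : ℝ) (hξ : ∀ k, ‖ξ k‖ < 3 / 4) (hδ : ∀ k, ‖ξ k - v k‖ < δ)
    (hδn : δ ≤ 1 / (8 * (n : ℝ) ^ 2))
    (P p : Polynomial ℂ)
    (hP : P = ∏ k, (X - C (ξ k))) (hp : p = ∏ k, (X - C (v k))) :
    ∀ i, ‖(P - p).coeff i‖ < 8 * n * δ * (7 / 4) ^ n := by
  intro i
  have hδ0 : 0 < δ := lt_of_le_of_lt (norm_nonneg _) (hδ ⟨0, hn⟩)
  have hn0 : (0:ℝ) < n := by exact_mod_cast hn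
  have hn1 : (1:ℝ) ≤ n := by exact_mod_cast hn
  set r : ℝ := 3/4 + δ with hrdef
  have hr : 0 ≤ r := by positivity
  set L : List (ℂ × ℂ) := List.ofFn (fun k => (ξ k, v k)) with hL
  have hlen : L.length = n := by simp [hL]
  have hmem : ∀ pq : ℂ × ℂ, pq ∈ L → ‖pq.1‖ ≤ r ∧ ‖pq.2‖ ≤ r := by
    intro pq hpq
    rw [hL, List.mem_ofFn] at hpq
    obtain ⟨k, rfl⟩ := hpq
    refine ⟨le_of_lt (lt_of_lt_of_le (hξ k) (by rw [hrdef]; linarith)), ?_⟩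
    have hv : ‖v k‖ ≤ ‖ξ k‖ + ‖ξ k - v k‖ := by
      have h := norm_sub_le (ξ k) (ξ k - v k)
      rwa [sub_sub_cancel] at h
    have := hξ k
    have := hδ k
    rw [hrdef]
    simp only []
    linarith
  have hP' : P = (L.map fun pq : ℂ × ℂ => X - C pq.1).prod := by
    rw [hP, hL, List.map_ofFn, List.prod_ofFn]
    rfl
  have hp' : p = (L.map fun pq : ℂ × ℂ => X - C pq.2).prod := by
    rw [hp, hL, List.map_ofFn, List.prod_ofFn]
    rfl
  have key := coeff_prod_sub_prod_le r hr L hmem i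
  rw [← hP', ← hp', hlen] at key
  have hsum : (L.map fun pq : ℂ × ℂ => ‖pq.1 - pq.2‖).sum = ∑ k, ‖ξ k - v k‖ := by
    rw [hL, List.map_ofFn, List.sum_ofFn]
    rfl
  rw [hsum] at key
  have hS : (∑ k, ‖ξ k - v k‖) < n * δ := by
    have hne : (Finset.univ : Finset (Fin n)).Nonempty := ⟨⟨0, hn⟩, Finset.mem_univ _⟩
    calc ∑ k, ‖ξ k - v k‖ < ∑ _k : Fin n, δ :=
          Finset.sum_lt_sum_of_nonempty hne (fun k _ => hδ k)
      _ = n * δ := by simp [mul_comm]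
  -- bound (1+r)^n ≤ 3 * (7/4)^n
  have e5 : (n:ℝ) * ((4/7) * δ) ≤ 1 := by
    have hnpos : (0:ℝ) < 8 * (n:ℝ)^2 := by positivity
    have h8 : δ * (8 * (n:ℝ)^2) ≤ 1 := (le_div_iff₀ hnpos).mp hδn
    nlinarith [mul_nonneg (mul_nonneg (sub_nonneg.mpr hn1) hδ0.le) hn0.le]
  have hpow : (1 + r) ^ n ≤ 3 * (7/4:ℝ) ^ n := by
    have e1 : (1:ℝ) + r = (7/4) * (1 + (4/7) * δ) := by rw [hrdef]; ring
    have e2 : (1:ℝ) + (4/7) * δ ≤ Real.exp ((4/7) * δ) := by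
      linarith [Real.add_one_le_exp ((4/7) * δ)]
    have e3 : (1 + r) ^ n ≤ (7/4:ℝ) ^ n * Real.exp ((4/7) * δ) ^ n := by
      rw [e1, mul_pow]
      exact mul_le_mul_of_nonneg_left (pow_le_pow_left₀ (by linarith) e2 n) (by positivity)
    have e4 : Real.exp ((4/7) * δ) ^ n = Real.exp ((n:ℝ) * ((4/7) * δ)) := by
      rw [← Real.exp_nat_mul]
    have e6 : Real.exp ((n:ℝ) * ((4/7) * δ)) ≤ Real.exp 1 := Real.exp_le_exp.mpr e5
    have e7 : Real.exp 1 ≤ 3 := by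
      have := Real.exp_one_lt_d9
      linarith [this]
    have hp7 : (0:ℝ) < (7/4:ℝ) ^ n := by positivity
    calc (1 + r) ^ n ≤ (7/4:ℝ) ^ n * Real.exp ((4/7) * δ) ^ n := e3
      _ = (7/4:ℝ) ^ n * Real.exp ((n:ℝ) * ((4/7) * δ)) := by rw [e4]
      _ ≤ (7/4:ℝ) ^ n * 3 := by
          exact mul_le_mul_of_nonneg_left (le_trans e6 e7) hp7.le
      _ = 3 * (7/4:ℝ) ^ n := by ring
  have hrpos : (0:ℝ) < 1 + r := by linarith
  have hp7 : (0:ℝ) < (7/4:ℝ) ^ n := by positivity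
  calc ‖(P - p).coeff i‖ ≤ (∑ k, ‖ξ k - v k‖) * (1 + r) ^ n := key
    _ < ((n:ℝ) * δ) * (1 + r) ^ n := by
        exact mul_lt_mul_of_pos_right hS (pow_pos hrpos n)
    _ ≤ ((n:ℝ) * δ) * (3 * (7/4:ℝ) ^ n) := by
        exact mul_le_mul_of_nonneg_left hpow (by positivity)
    _ < 8 * n * δ * (7/4:ℝ) ^ n := by nlinarith [mul_pos (mul_pos hn0 hδ0) hp7]
end
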